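/- For an integer n ≥ 2 that is a power of 2, the Möbius pattern complexity of ADDR_n is at least 2^n: the inputs (1^{log n}, s) for s ∈ {0,1}^n induce pairwise distinct evaluation patterns on the monomials {y_b · Π_{i∈[log n]} x_i : b ∈ [n]}, all of which lie in the Möbius support of ADDR_n. -/

import Mathlib

/-- The integer (element of `Fin 2^m`) whose binary representation is `x`. -/
def binOf {m : ℕ} (x : Fin m → Bool) : Fin (2 ^ m) :=
  finFunctionFinEquiv (fun i => if x i then 1 else 0)

/-- The Addressing function on `m + 2^m` input bits. -/
def ADDR (m : ℕ) (z : (Fin m ⊕ Fin (2 ^ m)) → Bool) : Bool :=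
  z (Sum.inr (binOf (fun i => z (Sum.inl i))))

/-- `AND_S(z)` as a Boolean, over an arbitrary index type. -/
def andB {ι : Type*} (S : Finset ι) (z : ι → Bool) : Bool :=
  decide (∀ i ∈ S, z i = true)

/-! Möbius inversion gives the coefficient of a monomial `S` as the alternating sum
`c S = ∑_{T ⊆ S} (-1)^|S \ T| f(1_T)`. For `S = {x_1, …, x_m, y_b}` exactly one `T ⊆ S` has
`ADDR(1_T) = 1`, namely `T = {x_i : bit i of b is 1} ∪ {y_b}`, so `c S = ±1`. On the inputs
`(1^m, s)` the monomial `y_b · ∏ x_i` evaluates to `s_b`, so these `2^n` inputs already have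
pairwise distinct patterns. -/

open Finset

section MoebiusInversion

variable {ι R : Type*} [DecidableEq ι] [CommRing R]

theorem Finset.sum_Icc_neg_one_pow_card_sdiff (U S : Finset ι) :
    ∑ T ∈ Icc U S, (-1 : R) ^ #(S \ T) = if U = S then 1 else 0 := by
  by_cases hUS : U ⊆ S
  · have hbij : ∑ T ∈ Icc U S, (-1 : R) ^ #(S \ T) = ∑ V ∈ (S \ U).powerset, (-1 : R) ^ #V := by
      refine sum_nbij' (S \ ·) (S \ ·) ?_ ?_ ?_ ?_ (fun _ _ => rfl) <;> intro T hT <;>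
        simp only [mem_Icc, mem_powerset] at hT ⊢
      · exact sdiff_subset_sdiff subset_rfl hT.1
      · exact ⟨subset_sdiff.2 ⟨hUS, disjoint_of_subset_right hT disjoint_sdiff⟩, sdiff_subset⟩
      · exact sdiff_sdiff_eq_self hT.2
      · exact sdiff_sdiff_eq_self (hT.trans sdiff_subset)
    have halt := congrArg (Int.cast : ℤ → R) (sum_powerset_neg_one_pow_card (x := S \ U))
    push_cast at halt
    rw [hbij, halt]
    exact if_congr (sdiff_eq_empty_iff_subset.trans ⟨subset_antisymm hUS, fun h => h.ge⟩) rfl rfl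
  · rw [Icc_eq_empty hUS, sum_empty, if_neg (fun h => hUS h.le)]

theorem Finset.sum_powerset_neg_one_pow_card_sdiff_mul_boole (U S : Finset ι) :
    ∑ T ∈ S.powerset, (-1 : R) ^ #(S \ T) * (if U ⊆ T then 1 else 0) =
      if U = S then 1 else 0 := by
  rw [← sum_Icc_neg_one_pow_card_sdiff, Icc_eq_filter_powerset, sum_filter]
  simp only [mul_ite, mul_one, mul_zero]

theorem coeff_eq_sum_powerset_neg_one_pow [Fintype ι] (F : (ι → Bool) → R) (c : Finset ι → R)
    (hF : ∀ z, F z = ∑ U, c U * ∏ i ∈ U, if z i then 1 else 0) (S : Finset ι) :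
    c S = ∑ T ∈ S.powerset, (-1) ^ #(S \ T) * F (fun i => decide (i ∈ T)) := by
  simp only [hF, decide_eq_true_eq, prod_boole, ← subset_iff, mul_sum]
  rw [sum_comm]
  simp only [mul_left_comm _ (c _), ← mul_sum, sum_powerset_neg_one_pow_card_sdiff_mul_boole]
  simp

end MoebiusInversion

theorem binOf_bijective (m : ℕ) : Function.Bijective (binOf (m := m)) := by
  have hequiv : binOf (m := m) =
      ((Equiv.refl _).arrowCongr finTwoEquiv.symm).trans finFunctionFinEquiv := by
    funext x
    refine congrArg finFunctionFinEquiv (funext fun i => ?_)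
    show _ = finTwoEquiv.symm (x i)
    cases x i <;> rfl
  rw [hequiv]
  exact Equiv.bijective _

theorem Finset.insert_inr_image_inl_eq_disjSum {α β : Type*} [DecidableEq α] [DecidableEq β]
    (s : Finset α) (b : β) : insert (Sum.inr b) (s.image Sum.inl) = s.disjSum {b} := by
  ext (a | b') <;> simp [eq_comm]

theorem andB_disjSum_singleton {α β : Type*} [Fintype α] (b : β) (s : β → Bool) :
    andB ((univ : Finset α).disjSum {b}) (Sum.elim (fun _ => true) s) = s b := by
  simp [andB]

theorem ADDR_indicator_eq_true_iff {m : ℕ} {x : Fin m → Bool} {T : Finset (Fin m ⊕ Fin (2 ^ m))}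
    (hT : T ⊆ univ.disjSum {binOf x}) :
    ADDR m (fun i => decide (i ∈ T)) = true ↔ T = ({i | x i} : Finset _).disjSum {binOf x} := by
  constructor
  · intro h
    have hmem := of_decide_eq_true h
    have haddr : binOf (fun i => decide (Sum.inl i ∈ T)) = binOf x := by simpa using hT hmem
    have hx : ∀ i, Sum.inl i ∈ T ↔ x i := fun i => by
      rw [← congrFun ((binOf_bijective m).1 haddr) i, decide_eq_true_iff]
    ext (i | j)
    · simpa using hx i
    · simp only [inr_mem_disjSum, mem_singleton]
      refine ⟨fun hj => by simpa using hT hj, ?_⟩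
      rintro rfl
      rwa [← haddr]
  · rintro rfl
    simp [ADDR]

theorem coeff_ADDR_disjSum_ne_zero {R : Type*} [CommRing R] [Nontrivial R] {m : ℕ}
    (c : Finset (Fin m ⊕ Fin (2 ^ m)) → R)
    (hf : ∀ z, (if ADDR m z then 1 else 0) = ∑ S, c S * ∏ i ∈ S, if z i then 1 else 0)
    (x : Fin m → Bool) : c (univ.disjSum {binOf x}) ≠ 0 := by
  set S : Finset (Fin m ⊕ Fin (2 ^ m)) := univ.disjSum {binOf x}
  set Tx : Finset (Fin m ⊕ Fin (2 ^ m)) := ({i | x i} : Finset _).disjSum {binOf x}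
  have hterm : ∀ T ∈ S.powerset,
      (-1 : R) ^ #(S \ T) * (if ADDR m (fun i => decide (i ∈ T)) then 1 else 0) =
        if T = Tx then (-1) ^ #(S \ T) else 0 := fun T hT => by
    rw [if_congr (ADDR_indicator_eq_true_iff (mem_powerset.1 hT)) rfl rfl, mul_ite, mul_one,
      mul_zero]
  have hTx : Tx ∈ S.powerset := mem_powerset.2 (disjSum_mono (subset_univ _) subset_rfl)
  rw [coeff_eq_sum_powerset_neg_one_pow _ c hf, sum_congr rfl hterm, sum_ite_eq', if_pos hTx]
  exact ((isUnit_one.neg).pow _).ne_zero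

theorem two_pow_card_le_card_patterns {α β : Type*} [Fintype α] [Fintype β] [DecidableEq α]
    [DecidableEq β] (Sf : Finset (Finset (α ⊕ β))) (h : ∀ b, (univ : Finset α).disjSum {b} ∈ Sf) :
    2 ^ Fintype.card β ≤
      #(univ.image fun z : α ⊕ β → Bool => fun S : {S // S ∈ Sf} => andB S.1 z) := by
  calc 2 ^ Fintype.card β = #(univ : Finset (β → Bool)) := by simp
    _ ≤ _ := by
      refine card_le_card_of_injOn (fun s S => andB S.1 (Sum.elim (fun _ => true) s))
        (fun s _ => mem_image_of_mem _ (mem_univ _)) fun s _ s' _ hss' => funext fun b => ?_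
      simpa only [andB_disjSum_singleton] using congrFun hss' ⟨_, h b⟩

theorem stmt16_general (m : ℕ) (c : Finset (Fin m ⊕ Fin (2 ^ m)) → ℝ)
    (Sf : Finset (Finset (Fin m ⊕ Fin (2 ^ m)))) (hmem : ∀ S, S ∈ Sf ↔ c S ≠ 0)
    (hf : ∀ z : (Fin m ⊕ Fin (2 ^ m)) → Bool,
      (if ADDR m z then (1 : ℝ) else 0) =
        ∑ S : Finset (Fin m ⊕ Fin (2 ^ m)), c S * ∏ i ∈ S, (if z i then (1 : ℝ) else 0)) :
    (∀ b : Fin (2 ^ m),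
      (insert (Sum.inr b) (Finset.univ.image Sum.inl) :
        Finset (Fin m ⊕ Fin (2 ^ m))) ∈ Sf) ∧
    2 ^ (2 ^ m) ≤
      (Finset.univ.image
        (fun z : (Fin m ⊕ Fin (2 ^ m)) → Bool =>
          fun S : {S // S ∈ Sf} => andB S.1 z)).card := by
  have hsupp : ∀ b : Fin (2 ^ m), (univ : Finset (Fin m)).disjSum {b} ∈ Sf := fun b => by
    obtain ⟨x, rfl⟩ := (binOf_bijective m).2 b
    exact (hmem _).2 (coeff_ADDR_disjSum_ne_zero c hf x)
  simp only [insert_inr_image_inl_eq_disjSum]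
  exact ⟨hsupp, by simpa using two_pow_card_le_card_patterns Sf hsupp⟩

/-- For `n = 2^m ≥ 2` a power of two, the Möbius pattern complexity of `ADDR_n` is at
least `2^n`; moreover each monomial `y_b · ∏_{i} x_i` lies in the Möbius support. -/
theorem stmt16 (m : ℕ) (hm : 1 ≤ m) (c : Finset (Fin m ⊕ Fin (2 ^ m)) → ℝ)
    (Sf : Finset (Finset (Fin m ⊕ Fin (2 ^ m)))) (hmem : ∀ S, S ∈ Sf ↔ c S ≠ 0)
    (hf : ∀ z : (Fin m ⊕ Fin (2 ^ m)) → Bool,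
      (if ADDR m z then (1 : ℝ) else 0) =
        ∑ S : Finset (Fin m ⊕ Fin (2 ^ m)), c S * ∏ i ∈ S, (if z i then (1 : ℝ) else 0)) :
    (∀ b : Fin (2 ^ m),
      (insert (Sum.inr b) (Finset.univ.image Sum.inl) :
        Finset (Fin m ⊕ Fin (2 ^ m))) ∈ Sf) ∧
    2 ^ (2 ^ m) ≤
      (Finset.univ.image
        (fun z : (Fin m ⊕ Fin (2 ^ m)) → Bool =>
          fun S : {S // S ∈ Sf} => andB S.1 z)).card :=
  stmt16_general m c Sf hmem hf
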